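/- Let P ∈ ℝ^{n×r}, Q ∈ ℝ^{ℓ×n}, R ∈ ℝ^{ℓ×r} satisfy im R ⊆ im Q and ker P ⊆ ker R (so that 𝒜 := { A ∈ ℝ^{n×n} : R = Q A P } is nonempty), and let B ∈ ℝ^{n×m}. Then rank [A − λI, B] = n for all A ∈ 𝒜 and all λ ∈ ℂ (i.e., by the Hautus test, (A,B) is controllable for all A ∈ 𝒜) if and only if ker Q ⊆ im B and rank [R − λQP, QB] = rank Q for all λ ∈ ℂ. Similarly, rank [A − λI, B] = n for all A ∈ 𝒜 and all λ ∈ ℂ with |λ| ≥ 1 (i.e., (A,B) is stabilizable for all A ∈ 𝒜) if and only if ker Q ⊆ im B and rank [R − λQP, QB] = rank Q for all λ ∈ ℂ with |λ| ≥ 1. -/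

import Mathlib

open Matrix

/-- Complexification of a real matrix. -/
noncomputable def cx {a b : ℕ} (M : Matrix (Fin a) (Fin b) ℝ) : Matrix (Fin a) (Fin b) ℂ :=
  M.map (algebraMap ℝ ℂ)

/-!
By the Hautus test, `rank [A - λI, B] < n` means that some `z ≠ 0` has `z A = λ z` and `z B = 0`.
If `ker Q ⊆ im B`, such a `z` annihilates `ker Q`, hence `z = η Q`, and since `R = Q A P` the
vector `η` lies in the left kernel of `[R - λQP, QB]` but not in that of `Q`: a rank drop below
`rank Q`.

Conversely, fix `A₀ ∈ 𝒜` (for generalized inverses `G`, `H` of `Q`, `P`, take `A₀ = G R H`) and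
perturb it to `A₀ + N` with `Q N P = 0`. If `x ∈ ker Q \ im B`, some `z` has `z B = 0` and
`z x ≠ 0`, and a rank-one `N = x wᵀ` makes `z` a left eigenvector for a prescribed real eigenvalue.
If `η` is in the left kernel of `[R - λQP, QB]` but `z = η Q ≠ 0`, then `z (A₀ - λ) P = 0`; when
`Re z` and `Im z` are independent, there is a real `N` with `N P = 0` and `z N = z (λ - A₀)`,
whose rows are combinations of the real and imaginary parts of the right-hand side. Otherwise
`z` is a multiple of a real vector, and either `λ` is real or `z` annihilates both `P` and `A₀ P`;
either way a rank-one `N` realizes some real eigenvalue of the set.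
-/

open Module

namespace Matrix

theorem eq_mul_add_mul_of_mul_mul_eq_zero {α : Type*} [NonUnitalNonAssocSemiring α]
    {l m n : Type*} [Fintype m] {A₀ N : Matrix m m α} {P : Matrix m n α} {Q : Matrix l m α}
    {R : Matrix l n α} (hA₀ : R = Q * A₀ * P) (hN : Q * N * P = 0) : R = Q * (A₀ + N) * P := by
  rw [Matrix.mul_add, Matrix.add_mul, hN, add_zero, hA₀]

variable {K : Type*} [Field K] {l m n k : Type*} [Fintype l] [Fintype m] [Fintype n] [Fintype k]

theorem rank_add_finrank_ker_vecMulLinear (M : Matrix m n K) :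
    M.rank + finrank K (LinearMap.ker M.vecMulLinear) = Fintype.card m := by
  rw [rank_eq_finrank_span_row, ← range_vecMulLinear, LinearMap.finrank_range_add_finrank_ker,
    finrank_fintype_fun_eq_card]

theorem rank_eq_card_iff_forall_vecMul_eq_zero (M : Matrix m n K) :
    M.rank = Fintype.card m ↔ ∀ z, z ᵥ* M = 0 → z = 0 := by
  change _ ↔ ∀ z, M.vecMulLinear z = 0 → z = 0
  rw [← LinearMap.ker_eq_bot', ← Submodule.finrank_eq_zero]
  have := M.rank_add_finrank_ker_vecMulLinear
  omega

theorem rank_mul_eq_rank_left_iff (Q : Matrix l m K) (M : Matrix m n K) :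
    (Q * M).rank = Q.rank ↔ ∀ η, η ᵥ* (Q * M) = 0 → η ᵥ* Q = 0 := by
  have hle : LinearMap.ker Q.vecMulLinear ≤ LinearMap.ker (Q * M).vecMulLinear := fun η hη => by
    simp_all [← vecMul_vecMul]
  have hQ := Q.rank_add_finrank_ker_vecMulLinear
  have hQM := (Q * M).rank_add_finrank_ker_vecMulLinear
  change _ ↔ LinearMap.ker (Q * M).vecMulLinear ≤ LinearMap.ker Q.vecMulLinear
  constructor
  · exact fun h => (Submodule.eq_of_le_of_finrank_eq hle (by omega)).ge
  · intro h
    rw [le_antisymm h hle] at hQM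
    omega

theorem mem_range_mulVecLin_of_forall_vecMul_eq_zero {B : Matrix m n K}
    {x : m → K} (h : ∀ z, z ᵥ* B = 0 → z ⬝ᵥ x = 0) : x ∈ LinearMap.range B.mulVecLin := by
  classical
  rw [← Subspace.forall_mem_dualAnnihilator_apply_eq_zero_iff]
  intro φ hφ
  set z : m → K := fun i => φ (Pi.single i 1)
  have hφz : ∀ y, φ y = z ⬝ᵥ y := fun y => by
    rw [LinearMap.pi_apply_eq_sum_univ φ y]
    simp only [z, dotProduct, smul_eq_mul, mul_comm]
    congr! 3 with i
    ext j
    simp [Pi.single_apply, eq_comm]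
  rw [hφz]
  refine h z (funext fun j => ?_)
  have := (Submodule.mem_dualAnnihilator φ).1 hφ (B *ᵥ Pi.single j 1) ⟨_, rfl⟩
  rwa [hφz, dotProduct_mulVec, dotProduct_single, mul_one] at this

theorem rank_fromCols_sub_smul_one_eq_card_iff [DecidableEq m] (A : Matrix m m K)
    (C : Matrix m n K) (lam : K) :
    (fromCols (A - lam • 1) C).rank = Fintype.card m ↔
      ∀ z, z ᵥ* A = lam • z → z ᵥ* C = 0 → z = 0 := by
  simp [rank_eq_card_iff_forall_vecMul_eq_zero, funext_iff, Sum.forall, vecMul_sub, vecMul_smul,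
    sub_eq_zero]

theorem rank_fromCols_sub_smul_mul_eq_rank_iff {Q : Matrix l m K} {R : Matrix l k K}
    {X : Matrix m k K} (hR : R = Q * X) (P : Matrix m k K) (C : Matrix m n K) (lam : K) :
    (fromCols (R - lam • (Q * P)) (Q * C)).rank = Q.rank ↔
      ∀ η, η ᵥ* R = lam • (η ᵥ* (Q * P)) → η ᵥ* (Q * C) = 0 → η ᵥ* Q = 0 := by
  have hG : fromCols (R - lam • (Q * P)) (Q * C) = Q * fromCols (X - lam • P) C := by
    rw [mul_fromCols, Matrix.mul_sub, Matrix.mul_smul, hR]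
  rw [hG, rank_mul_eq_rank_left_iff, ← hG]
  simp [funext_iff, Sum.forall, vecMul_sub, vecMul_smul, sub_eq_zero]

theorem exists_mul_mul_self_eq [DecidableEq m] [DecidableEq n] (M : Matrix m n K) :
    ∃ G : Matrix n m K, M * G * M = M := by
  set f := M.mulVecLin
  obtain ⟨h, hh⟩ := f.rangeRestrict.exists_rightInverse_of_surjective f.range_rangeRestrict
  obtain ⟨g, hg⟩ := LinearMap.exists_extend h
  refine ⟨LinearMap.toMatrix' g, Matrix.toLin'.injective (LinearMap.ext fun x => ?_)⟩
  have hfx : g (f x) = h (f.rangeRestrict x) := LinearMap.congr_fun hg (f.rangeRestrict x)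
  have hfh : f (h (f.rangeRestrict x)) = f x :=
    congrArg Subtype.val (LinearMap.congr_fun hh (f.rangeRestrict x))
  simp only [Matrix.toLin'_mul, LinearMap.comp_apply, Matrix.toLin'_toMatrix']
  change f (g (f x)) = f x
  rw [hfx, hfh]

theorem exists_eq_mul_mul_of_range_le_of_ker_le {P : Matrix m n K} {Q : Matrix l m K}
    {R : Matrix l n K} (him : LinearMap.range R.mulVecLin ≤ LinearMap.range Q.mulVecLin)
    (hker : LinearMap.ker P.mulVecLin ≤ LinearMap.ker R.mulVecLin) :
    ∃ A : Matrix m m K, R = Q * A * P := by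
  classical
  obtain ⟨G, hG⟩ := Q.exists_mul_mul_self_eq
  obtain ⟨H, hH⟩ := P.exists_mul_mul_self_eq
  have hQR : Q * G * R = R := Matrix.toLin'.injective <| LinearMap.ext fun x => by
    obtain ⟨y, hy⟩ := him ⟨x, rfl⟩
    simp only [mulVecLin_apply] at hy
    simp only [Matrix.toLin'_mul, LinearMap.comp_apply, Matrix.toLin'_apply, ← hy, mulVec_mulVec,
      ← Matrix.mul_assoc, hG]
  have hRP : R * H * P = R := Matrix.toLin'.injective <| LinearMap.ext fun x => by
    have : H *ᵥ (P *ᵥ x) - x ∈ LinearMap.ker P.mulVecLin := by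
      simp [mulVec_sub, mulVec_mulVec, ← Matrix.mul_assoc, hH]
    simpa [Matrix.toLin'_mul, mulVec_sub, sub_eq_zero, mulVec_mulVec] using hker this
  exact ⟨G * R * H, by simp only [← Matrix.mul_assoc, hQR, hRP]⟩

theorem vecMul_add_smul_vecMulVec (A : Matrix m m K) {z x : m → K} (hzx : z ⬝ᵥ x ≠ 0)
    (w : m → K) : z ᵥ* (A + (z ⬝ᵥ x)⁻¹ • vecMulVec x w) = z ᵥ* A + w := by
  rw [vecMul_add, vecMul_smul, vecMul_vecMulVec, smul_smul, inv_mul_cancel₀ hzx, one_smul]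

end Matrix

section FieldExtension

variable {K L : Type*} [Field K] [Field L] [Algebra K L] {m n : Type*} [Fintype m] [Fintype n]

theorem Submodule.finrank_le_finrank_of_algebraMap_comp_mem {V : Submodule K (n → K)}
    {W : Submodule L (n → L)} (h : ∀ v ∈ V, algebraMap K L ∘ v ∈ W) :
    finrank K V ≤ finrank L W := by
  let b := Module.finBasis K V
  have hli : LinearIndependent L fun i => (⟨algebraMap K L ∘ (b i : n → K), h _ (b i).2⟩ : W) :=
    LinearIndependent.of_comp W.subtype <| linearIndependent_algebraMap_comp_iff.2 <|
      b.linearIndependent.map' V.subtype V.ker_subtype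
  simpa using hli.fintype_card_le_finrank

theorem Matrix.rank_map_algebraMap (M : Matrix m n K) :
    (M.map (algebraMap K L)).rank = M.rank := by
  have hmulVec (v : n → K) : M.map (algebraMap K L) *ᵥ (algebraMap K L ∘ v) =
      algebraMap K L ∘ (M *ᵥ v) := funext fun i => (RingHom.map_mulVec _ M v i).symm
  refine le_antisymm ?_ (Submodule.finrank_le_finrank_of_algebraMap_comp_mem ?_)
  · have hker := Submodule.finrank_le_finrank_of_algebraMap_comp_mem
      (W := LinearMap.ker (M.map (algebraMap K L)).mulVecLin) (V := LinearMap.ker M.mulVecLin)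
      fun v hv => by simp_all
    have hM := LinearMap.finrank_range_add_finrank_ker M.mulVecLin
    have hML := LinearMap.finrank_range_add_finrank_ker (M.map (algebraMap K L)).mulVecLin
    simp only [finrank_fintype_fun_eq_card] at hM hML
    unfold Matrix.rank
    omega
  · rintro _ ⟨v, rfl⟩
    exact ⟨algebraMap K L ∘ v, hmulVec v⟩

end FieldExtension

section Complexification

variable {a b : ℕ}

theorem cx_mul {c : ℕ} (M : Matrix (Fin a) (Fin b) ℝ) (N : Matrix (Fin b) (Fin c) ℝ) :
    cx (M * N) = cx M * cx N :=
  Matrix.map_mul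

theorem rank_cx (M : Matrix (Fin a) (Fin b) ℝ) : (cx M).rank = M.rank :=
  M.rank_map_algebraMap

theorem cx_add (M N : Matrix (Fin a) (Fin b) ℝ) : cx (M + N) = cx M + cx N :=
  Matrix.map_add _ (map_add _) M N

theorem algebraMap_comp_vecMul (v : Fin a → ℝ) (M : Matrix (Fin a) (Fin b) ℝ) :
    algebraMap ℝ ℂ ∘ (v ᵥ* M) = (algebraMap ℝ ℂ ∘ v) ᵥ* cx M :=
  funext (RingHom.map_vecMul _ M v)

theorem algebraMap_comp_mulVec (M : Matrix (Fin a) (Fin b) ℝ) (v : Fin b → ℝ) :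
    algebraMap ℝ ℂ ∘ (M *ᵥ v) = cx M *ᵥ (algebraMap ℝ ℂ ∘ v) :=
  funext (RingHom.map_mulVec _ M v)

theorem re_comp_vecMul (z : Fin a → ℂ) (M : Matrix (Fin a) (Fin b) ℝ) :
    Complex.re ∘ (z ᵥ* cx M) = (Complex.re ∘ z) ᵥ* M := by
  ext; simp [vecMul, dotProduct, cx, Complex.re_sum]

theorem im_comp_vecMul (z : Fin a → ℂ) (M : Matrix (Fin a) (Fin b) ℝ) :
    Complex.im ∘ (z ᵥ* cx M) = (Complex.im ∘ z) ᵥ* M := by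
  ext; simp [vecMul, dotProduct, cx, Complex.im_sum]

theorem re_comp_mulVec (M : Matrix (Fin a) (Fin b) ℝ) (z : Fin b → ℂ) :
    Complex.re ∘ (cx M *ᵥ z) = M *ᵥ (Complex.re ∘ z) := by
  ext; simp [mulVec, dotProduct, cx, Complex.re_sum]

theorem im_comp_mulVec (M : Matrix (Fin a) (Fin b) ℝ) (z : Fin b → ℂ) :
    Complex.im ∘ (cx M *ᵥ z) = M *ᵥ (Complex.im ∘ z) := by
  ext; simp [mulVec, dotProduct, cx, Complex.im_sum]

theorem algebraMap_comp_re_add_I_smul (z : Fin a → ℂ) :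
    algebraMap ℝ ℂ ∘ (Complex.re ∘ z) + Complex.I • algebraMap ℝ ℂ ∘ (Complex.im ∘ z) = z := by
  ext; simp [Complex.ext_iff]

theorem dotProduct_algebraMap_comp (z : Fin a → ℂ) (w : Fin a → ℝ) :
    z ⬝ᵥ (algebraMap ℝ ℂ ∘ w) =
      ((Complex.re ∘ z) ⬝ᵥ w : ℝ) + ((Complex.im ∘ z) ⬝ᵥ w : ℝ) * Complex.I := by
  simp [Complex.ext_iff, dotProduct, Complex.re_sum, Complex.im_sum]

theorem cx_vecMulVec (x : Fin a → ℝ) (y : Fin b → ℝ) :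
    cx (vecMulVec x y) = vecMulVec (algebraMap ℝ ℂ ∘ x) (algebraMap ℝ ℂ ∘ y) := by
  ext; simp [cx, vecMulVec_apply]

theorem ker_cx_le_range_cx {c : ℕ} {Q : Matrix (Fin c) (Fin a) ℝ} {B : Matrix (Fin a) (Fin b) ℝ}
    (hQB : LinearMap.ker Q.mulVecLin ≤ LinearMap.range B.mulVecLin) :
    LinearMap.ker (cx Q).mulVecLin ≤ LinearMap.range (cx B).mulVecLin := by
  intro x hx
  rw [LinearMap.mem_ker, mulVecLin_apply] at hx
  obtain ⟨u₁, hu₁⟩ := hQB (x := Complex.re ∘ x) (by simp [← re_comp_mulVec, hx])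
  obtain ⟨u₂, hu₂⟩ := hQB (x := Complex.im ∘ x) (by simp [← im_comp_mulVec, hx])
  refine ⟨algebraMap ℝ ℂ ∘ u₁ + Complex.I • algebraMap ℝ ℂ ∘ u₂, ?_⟩
  simp only [mulVecLin_apply] at hu₁ hu₂ ⊢
  rw [mulVec_add, mulVec_smul, ← algebraMap_comp_mulVec, ← algebraMap_comp_mulVec, hu₁, hu₂,
    algebraMap_comp_re_add_I_smul]

theorem exists_dotProduct_algebraMap_comp_eq {z : Fin a → ℂ}
    (hz : LinearIndependent ℝ ![Complex.re ∘ z, Complex.im ∘ z]) (c : ℂ) :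
    ∃ w : Fin a → ℝ, z ⬝ᵥ (algebraMap ℝ ℂ ∘ w) = c := by
  let Z : Matrix (Fin 2) (Fin a) ℝ := Matrix.of ![Complex.re ∘ z, Complex.im ∘ z]
  have hZ : LinearMap.range Z.mulVecLin = ⊤ :=
    Submodule.eq_top_of_finrank_eq <| by
      rw [finrank_fintype_fun_eq_card, ← Matrix.rank, LinearIndependent.rank_matrix (M := Z) hz]
  obtain ⟨w, hw⟩ : ![c.re, c.im] ∈ LinearMap.range Z.mulVecLin := hZ ▸ Submodule.mem_top
  refine ⟨w, ?_⟩
  have h0 : (Complex.re ∘ z) ⬝ᵥ w = c.re := congrFun hw 0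
  have h1 : (Complex.im ∘ z) ⬝ᵥ w = c.im := congrFun hw 1
  rw [dotProduct_algebraMap_comp, h0, h1, Complex.re_add_im]

theorem exists_vecMul_cx_eq_of_linearIndependent {z v : Fin a → ℂ}
    (hz : LinearIndependent ℝ ![Complex.re ∘ z, Complex.im ∘ z]) {P : Matrix (Fin a) (Fin b) ℝ}
    (hv : v ᵥ* cx P = 0) : ∃ N : Matrix (Fin a) (Fin a) ℝ, z ᵥ* cx N = v ∧ N * P = 0 := by
  obtain ⟨w₁, hw₁⟩ := exists_dotProduct_algebraMap_comp_eq hz 1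
  obtain ⟨w₂, hw₂⟩ := exists_dotProduct_algebraMap_comp_eq hz Complex.I
  refine ⟨vecMulVec w₁ (Complex.re ∘ v) + vecMulVec w₂ (Complex.im ∘ v), ?_, ?_⟩
  · rw [cx_add, vecMul_add, cx_vecMulVec, cx_vecMulVec, vecMul_vecMulVec, vecMul_vecMulVec, hw₁,
      hw₂, one_smul, algebraMap_comp_re_add_I_smul]
  · rw [Matrix.add_mul, vecMulVec_mul, vecMulVec_mul, ← re_comp_vecMul, ← im_comp_vecMul, hv]
    ext
    simp [vecMulVec_apply]

theorem exists_smul_eq_algebraMap_comp {z : Fin a → ℂ}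
    (hz : ¬ LinearIndependent ℝ ![Complex.re ∘ z, Complex.im ∘ z]) :
    ∃ c : ℂ, c ≠ 0 ∧ ∃ z₀ : Fin a → ℝ, c • z = algebraMap ℝ ℂ ∘ z₀ := by
  rw [LinearIndependent.pair_iff] at hz
  push Not at hz
  obtain ⟨s, t, hst, hne⟩ := hz
  -- `s • Re z + t • Im z = 0` says exactly that `(t + s i) • z` is real
  refine ⟨⟨t, s⟩, fun h => ?_, t • (Complex.re ∘ z) - s • (Complex.im ∘ z), funext fun j => ?_⟩
  · simp only [Complex.ext_iff, Complex.zero_re, Complex.zero_im] at h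
    exact hne h.2 h.1
  · simpa [Complex.ext_iff, add_comm] using congrFun hst j

theorem exists_real_mem_eq_smul_of_algebraMap_comp_eq_smul {S : Set ℂ} {t₀ : ℝ}
    (ht₀ : (t₀ : ℂ) ∈ S) {lam : ℂ} (hlam : lam ∈ S) {x y : Fin a → ℝ}
    (h : algebraMap ℝ ℂ ∘ x = lam • algebraMap ℝ ℂ ∘ y) : ∃ t : ℝ, (t : ℂ) ∈ S ∧ x = t • y := by
  have hre (j) : x j = lam.re * y j := by simpa using congrArg Complex.re (congrFun h j)
  have him (j) : 0 = lam.im * y j := by simpa using congrArg Complex.im (congrFun h j)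
  by_cases hlam_im : lam.im = 0
  · refine ⟨lam.re, ?_, funext hre⟩
    rwa [show (lam.re : ℂ) = lam from Complex.ext rfl (by simp [hlam_im])]
  · have hy : y = 0 := funext fun j => (mul_eq_zero.1 (him j).symm).resolve_left hlam_im
    refine ⟨t₀, ht₀, funext fun j => ?_⟩
    simp [hre, hy]

end Complexification

section UniformHautus

variable {n r l m : ℕ} {P : Matrix (Fin n) (Fin r) ℝ} {Q : Matrix (Fin l) (Fin n) ℝ}
  {R : Matrix (Fin l) (Fin r) ℝ} {B : Matrix (Fin n) (Fin m) ℝ} {A₀ : Matrix (Fin n) (Fin n) ℝ}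
  {S : Set ℂ} {t₀ : ℝ}

theorem exists_smul_leftEigenvector (hA₀ : R = Q * A₀ * P) (ht₀ : (t₀ : ℂ) ∈ S) {lam : ℂ}
    (hlam : lam ∈ S) {z : Fin n → ℂ} (hz : z ≠ 0)
    (hzP : (z ᵥ* cx A₀) ᵥ* cx P = lam • (z ᵥ* cx P)) :
    ∃ A, R = Q * A * P ∧ ∃ μ ∈ S, ∃ c : ℂ, c ≠ 0 ∧ (c • z) ᵥ* cx A = μ • (c • z) := by
  by_cases hli : LinearIndependent ℝ ![Complex.re ∘ z, Complex.im ∘ z]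
  · obtain ⟨N, hzN, hNP⟩ := exists_vecMul_cx_eq_of_linearIndependent hli
      (v := lam • z - z ᵥ* cx A₀) (by rw [sub_vecMul, smul_vecMul, hzP, sub_self])
    refine ⟨A₀ + N, eq_mul_add_mul_of_mul_mul_eq_zero hA₀ (by rw [Matrix.mul_assoc, hNP,
      Matrix.mul_zero]), lam, hlam, 1, one_ne_zero, ?_⟩
    rw [one_smul, cx_add, vecMul_add, hzN, add_sub_cancel]
  · obtain ⟨c, hc, z₀, hz₀⟩ := exists_smul_eq_algebraMap_comp hli
    have hz₀0 : z₀ ≠ 0 := by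
      rintro rfl
      exact smul_ne_zero hc hz (by rw [hz₀]; ext; simp)
    have hz₀P : algebraMap ℝ ℂ ∘ ((z₀ ᵥ* A₀) ᵥ* P) = lam • algebraMap ℝ ℂ ∘ (z₀ ᵥ* P) := by
      rw [algebraMap_comp_vecMul, algebraMap_comp_vecMul, algebraMap_comp_vecMul, ← hz₀,
        smul_vecMul, smul_vecMul, hzP, smul_vecMul, smul_comm]
    obtain ⟨t, ht, htP⟩ := exists_real_mem_eq_smul_of_algebraMap_comp_eq_smul ht₀ hlam hz₀P
    have hz₀z₀ : z₀ ⬝ᵥ z₀ ≠ 0 := mt dotProduct_self_eq_zero.1 hz₀0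
    refine ⟨A₀ + (z₀ ⬝ᵥ z₀)⁻¹ • vecMulVec z₀ (t • z₀ - z₀ ᵥ* A₀),
      eq_mul_add_mul_of_mul_mul_eq_zero hA₀ ?_, t, ht, c, hc, ?_⟩
    · have hNP : vecMulVec z₀ (t • z₀ - z₀ ᵥ* A₀) * P = 0 := by
        rw [vecMulVec_mul, sub_vecMul, smul_vecMul, htP, sub_self]
        ext
        simp [vecMulVec_apply]
      rw [Matrix.mul_smul, Matrix.smul_mul, Matrix.mul_assoc, hNP, Matrix.mul_zero, smul_zero]
    · rw [hz₀, ← algebraMap_comp_vecMul, vecMul_add_smul_vecMulVec _ hz₀z₀, add_sub_cancel]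
      ext
      simp

theorem ker_le_range_of_forall_leftEigenvector_eq_zero (hA₀ : R = Q * A₀ * P)
    (ht₀ : (t₀ : ℂ) ∈ S) (H : ∀ A, R = Q * A * P → ∀ lam ∈ S, ∀ z : Fin n → ℂ,
      z ᵥ* cx A = lam • z → z ᵥ* cx B = 0 → z = 0) :
    LinearMap.ker Q.mulVecLin ≤ LinearMap.range B.mulVecLin := by
  intro x hx
  rw [LinearMap.mem_ker, mulVecLin_apply] at hx
  by_contra hxB
  obtain ⟨z, hzB, hzx⟩ : ∃ z, z ᵥ* B = 0 ∧ z ⬝ᵥ x ≠ 0 := by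
    by_contra! h
    exact hxB (mem_range_mulVecLin_of_forall_vecMul_eq_zero h)
  have hA : R = Q * (A₀ + (z ⬝ᵥ x)⁻¹ • vecMulVec x (t₀ • z - z ᵥ* A₀)) * P :=
    eq_mul_add_mul_of_mul_mul_eq_zero hA₀ (by rw [Matrix.mul_smul, mul_vecMulVec, hx]; simp)
  have hz := H _ hA t₀ ht₀ (algebraMap ℝ ℂ ∘ z)
    (by rw [← algebraMap_comp_vecMul, vecMul_add_smul_vecMulVec _ hzx, add_sub_cancel]; ext; simp)
    (by rw [← algebraMap_comp_vecMul, hzB]; ext; simp)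
  exact hzx (by simp [(Complex.ofReal_injective.comp_left hz :)])

theorem vecMul_eq_zero_of_forall_leftEigenvector_eq_zero (hA₀ : R = Q * A₀ * P)
    (ht₀ : (t₀ : ℂ) ∈ S) (H : ∀ A, R = Q * A * P → ∀ lam ∈ S, ∀ z : Fin n → ℂ,
      z ᵥ* cx A = lam • z → z ᵥ* cx B = 0 → z = 0)
    {lam : ℂ} (hlam : lam ∈ S) (η : Fin l → ℂ) (hR : η ᵥ* cx R = lam • (η ᵥ* (cx Q * cx P)))
    (hB : η ᵥ* (cx Q * cx B) = 0) : η ᵥ* cx Q = 0 := by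
  by_contra hz
  obtain ⟨A, hA, μ, hμ, c, hc, hcz⟩ := exists_smul_leftEigenvector hA₀ ht₀ hlam hz
    (by rw [vecMul_vecMul, vecMul_vecMul, ← cx_mul, ← cx_mul, ← Matrix.mul_assoc, ← hA₀, hR,
      vecMul_vecMul])
  have := H A hA μ hμ _ hcz (by rw [smul_vecMul, vecMul_vecMul, hB, smul_zero])
  exact hz ((smul_eq_zero.1 this).resolve_left hc)

theorem leftEigenvector_eq_zero_of_ker_le_range
    (hQB : LinearMap.ker Q.mulVecLin ≤ LinearMap.range B.mulVecLin) {lam : ℂ}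
    (hdata : ∀ η : Fin l → ℂ, η ᵥ* cx R = lam • (η ᵥ* (cx Q * cx P)) →
      η ᵥ* (cx Q * cx B) = 0 → η ᵥ* cx Q = 0)
    {A : Matrix (Fin n) (Fin n) ℝ} (hA : R = Q * A * P) {z : Fin n → ℂ}
    (hzA : z ᵥ* cx A = lam • z) (hzB : z ᵥ* cx B = 0) : z = 0 := by
  obtain ⟨η, rfl⟩ : ∃ η, η ᵥ* cx Q = z := by
    have : z ∈ LinearMap.range (cx Q)ᵀ.mulVecLin :=
      mem_range_mulVecLin_of_forall_vecMul_eq_zero fun x hx => by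
        rw [vecMul_transpose] at hx
        obtain ⟨u, rfl⟩ := ker_cx_le_range_cx hQB hx
        rw [mulVecLin_apply, dotProduct_comm, dotProduct_mulVec, hzB, zero_dotProduct]
    obtain ⟨η, hη⟩ := this
    exact ⟨η, by rwa [mulVecLin_apply, mulVec_transpose] at hη⟩
  apply hdata η
  · rw [hA, cx_mul, cx_mul, ← vecMul_vecMul, ← vecMul_vecMul, hzA, smul_vecMul, vecMul_vecMul]
  · rw [← vecMul_vecMul, hzB]

theorem forall_rank_fromCols_eq_iff (hA₀ : R = Q * A₀ * P) (ht₀ : (t₀ : ℂ) ∈ S) :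
    (∀ A : Matrix (Fin n) (Fin n) ℝ, R = Q * A * P → ∀ lam ∈ S,
        (fromCols (cx A - lam • 1) (cx B)).rank = n) ↔
      LinearMap.ker Q.mulVecLin ≤ LinearMap.range B.mulVecLin ∧
        ∀ lam ∈ S, (fromCols (cx R - lam • (cx Q * cx P)) (cx Q * cx B)).rank = Q.rank := by
  have hR : cx R = cx Q * cx (A₀ * P) := by rw [hA₀, Matrix.mul_assoc, cx_mul]
  have hautus (A : Matrix (Fin n) (Fin n) ℝ) (lam : ℂ) :=
    Fintype.card_fin n ▸ rank_fromCols_sub_smul_one_eq_card_iff (cx A) (cx B) lam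
  simp only [hautus, ← rank_cx Q, rank_fromCols_sub_smul_mul_eq_rank_iff hR]
  refine ⟨fun H => ⟨ker_le_range_of_forall_leftEigenvector_eq_zero hA₀ ht₀ H,
    fun lam hlam => vecMul_eq_zero_of_forall_leftEigenvector_eq_zero hA₀ ht₀ H hlam⟩, ?_⟩
  rintro ⟨hQB, hdata⟩ A hA lam hlam z
  exact leftEigenvector_eq_zero_of_ker_le_range hQB (hdata lam hlam) hA

end UniformHautus

/-- uniform Hautus test for controllability / stabilizability of (A,B)
over the affine set 𝒜 = { A : R = Q A P }. -/
theorem uniform_hautus_controllability_stabilizability (n r l m : ℕ)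
    (P : Matrix (Fin n) (Fin r) ℝ) (Q : Matrix (Fin l) (Fin n) ℝ)
    (R : Matrix (Fin l) (Fin r) ℝ) (B : Matrix (Fin n) (Fin m) ℝ)
    (him : LinearMap.range R.mulVecLin ≤ LinearMap.range Q.mulVecLin)
    (hker : LinearMap.ker P.mulVecLin ≤ LinearMap.ker R.mulVecLin) :
    ((∀ A : Matrix (Fin n) (Fin n) ℝ, R = Q * A * P → ∀ lam : ℂ,
        (fromCols (cx A - lam • 1) (cx B)).rank = n) ↔
      (LinearMap.ker Q.mulVecLin ≤ LinearMap.range B.mulVecLin ∧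
        ∀ lam : ℂ,
          (fromCols (cx R - lam • (cx Q * cx P)) (cx Q * cx B)).rank = Q.rank))
    ∧
    ((∀ A : Matrix (Fin n) (Fin n) ℝ, R = Q * A * P → ∀ lam : ℂ, 1 ≤ ‖lam‖ →
        (fromCols (cx A - lam • 1) (cx B)).rank = n) ↔
      (LinearMap.ker Q.mulVecLin ≤ LinearMap.range B.mulVecLin ∧
        ∀ lam : ℂ, 1 ≤ ‖lam‖ →
          (fromCols (cx R - lam • (cx Q * cx P)) (cx Q * cx B)).rank = Q.rank)) := by
  obtain ⟨A₀, hA₀⟩ := exists_eq_mul_mul_of_range_le_of_ker_le him hker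
  refine ⟨?_, forall_rank_fromCols_eq_iff (S := {lam | 1 ≤ ‖lam‖}) (t₀ := 1) hA₀ (by simp)⟩
  simpa only [Set.mem_univ, forall_const] using
    forall_rank_fromCols_eq_iff (S := Set.univ) (t₀ := 0) (B := B) hA₀ (Set.mem_univ _)
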